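/- arXiv:1905.06179 — 4 statements merged into one kernel-verified Lean document; each statement's English description precedes it below -/
import Mathlib

section
/- Let (Z_{k+1}, E_{k+1}, λ_{k+1}) be obtained from (Z_k, E_k, λ_k) by one D-LADMM step with parameters (W_k, θ_k, β_k). Define F_k(Z,E,−λ) = (W_kᵀλ, λ, AZ+E−X), G_k(E') = (W_kᵀ(β_k∘E'), β_k∘E', 0), and let H_k be the block operator H built from (W_k, θ_k, β_k). Then for every Z ∈ ℝ^{d×n}, E ∈ ℝ^{m×n}, λ ∈ ℝ^{m×n}, writing ω = (Z,E,−λ) and ω_j = (Z_j,E_j,−λ_j), it holds that f(Z) + g(E) − f(Z_{k+1}) − g(E_{k+1}) + ⟨ω − ω_{k+1}, F_k(ω_{k+1}) + G_k(E_k − E_{k+1}) + H_k(ω_{k+1} − ω_k)⟩ ≥ 0. -/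
open Matrix

noncomputable section

/-- Frobenius inner product `⟨M, N⟩ = trace (Mᵀ N)`. -/
def finner {a b : ℕ} (M N : Matrix (Fin a) (Fin b) ℝ) : ℝ := (Mᵀ * N).trace

/-- Frobenius norm. -/
def fnorm {a b : ℕ} (M : Matrix (Fin a) (Fin b) ℝ) : ℝ := Real.sqrt (finner M M)

/-- Entrywise positivity of a matrix. -/
def EntrywisePos {a b : ℕ} (M : Matrix (Fin a) (Fin b) ℝ) : Prop := ∀ i j, 0 < M i j

/-- Entrywise reciprocal of a matrix. -/
def recip {a b : ℕ} (M : Matrix (Fin a) (Fin b) ℝ) : Matrix (Fin a) (Fin b) ℝ :=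
  Matrix.of fun i j => (M i j)⁻¹

/-- Convex subdifferential w.r.t. the Frobenius inner product. -/
def subdiff {a b : ℕ} (f : Matrix (Fin a) (Fin b) ℝ → ℝ) (x : Matrix (Fin a) (Fin b) ℝ) :
    Set (Matrix (Fin a) (Fin b) ℝ) :=
  {u | ∀ y, f y ≥ f x + finner u (y - x)}

/-- Spectral norm (largest singular value), via the Euclidean operator characterization. -/
def specNorm {a b : ℕ} (M : Matrix (Fin a) (Fin b) ℝ) : ℝ :=
  sSup {r | ∃ x : Fin b → ℝ, (∑ i, x i ^ 2) = 1 ∧ r = Real.sqrt (∑ i, (M.mulVec x i) ^ 2)}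

/-- Triples ω = (Z, E, Λ) (with Λ standing for −λ). -/
abbrev Triple (m d n : ℕ) :=
  Matrix (Fin d) (Fin n) ℝ × Matrix (Fin m) (Fin n) ℝ × Matrix (Fin m) (Fin n) ℝ

/-- Blockwise Frobenius inner product on triples. -/
def tinner {m d n : ℕ} (ω ω' : Triple m d n) : ℝ :=
  finner ω.1 ω'.1 + finner ω.2.1 ω'.2.1 + finner ω.2.2 ω'.2.2

/-- Blockwise Frobenius norm on triples. -/
def tfnorm {m d n : ℕ} (ω : Triple m d n) : ℝ := Real.sqrt (tinner ω ω)

/-- The linear operator `D(Z) = θ∘Z − Wᵀ(β∘(AZ))`. -/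
def Dop {m d n : ℕ} (A W : Matrix (Fin m) (Fin d) ℝ) (θ : Matrix (Fin d) (Fin n) ℝ)
    (β : Matrix (Fin m) (Fin n) ℝ) (Z : Matrix (Fin d) (Fin n) ℝ) : Matrix (Fin d) (Fin n) ℝ :=
  Matrix.hadamard θ Z - Wᵀ * Matrix.hadamard β (A * Z)

/-- The block operator `H(Z,E,Λ) = (D(Z), β∘E, β⁻¹∘Λ)`. -/
def Hop {m d n : ℕ} (A W : Matrix (Fin m) (Fin d) ℝ) (θ : Matrix (Fin d) (Fin n) ℝ)
    (β : Matrix (Fin m) (Fin n) ℝ) (ω : Triple m d n) : Triple m d n :=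
  (Dop A W θ β ω.1, Matrix.hadamard β ω.2.1, Matrix.hadamard (recip β) ω.2.2)

/-- `F(Z,E,−λ) = (Wᵀλ, λ, AZ+E−X)`. -/
def Fop {m d n : ℕ} (A : Matrix (Fin m) (Fin d) ℝ) (X : Matrix (Fin m) (Fin n) ℝ)
    (W : Matrix (Fin m) (Fin d) ℝ) (ω : Triple m d n) : Triple m d n :=
  (Wᵀ * (-ω.2.2), -ω.2.2, A * ω.1 + ω.2.1 - X)

/-- `G(E') = (Wᵀ(β∘E'), β∘E', 0)`. -/
def Gop {m d n : ℕ} (W : Matrix (Fin m) (Fin d) ℝ) (β : Matrix (Fin m) (Fin n) ℝ)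
    (E' : Matrix (Fin m) (Fin n) ℝ) : Triple m d n :=
  (Wᵀ * Matrix.hadamard β E', Matrix.hadamard β E', 0)

/-- The point `R = Z_k − θ⁻¹∘[Wᵀ(λ_k + β∘(AZ_k+E_k−X))]`. -/
def Rmat {m d n : ℕ} (A : Matrix (Fin m) (Fin d) ℝ) (X : Matrix (Fin m) (Fin n) ℝ)
    (W : Matrix (Fin m) (Fin d) ℝ) (θ : Matrix (Fin d) (Fin n) ℝ) (β : Matrix (Fin m) (Fin n) ℝ)
    (Zk : Matrix (Fin d) (Fin n) ℝ) (Ek lk : Matrix (Fin m) (Fin n) ℝ) :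
    Matrix (Fin d) (Fin n) ℝ :=
  Zk - Matrix.hadamard (recip θ) (Wᵀ * (lk + Matrix.hadamard β (A * Zk + Ek - X)))

/-- The point `S = X − AZ_{k+1} − β⁻¹∘λ_k`. -/
def Smat {m d n : ℕ} (A : Matrix (Fin m) (Fin d) ℝ) (X : Matrix (Fin m) (Fin n) ℝ)
    (β : Matrix (Fin m) (Fin n) ℝ) (Zk1 : Matrix (Fin d) (Fin n) ℝ)
    (lk : Matrix (Fin m) (Fin n) ℝ) : Matrix (Fin m) (Fin n) ℝ :=
  X - A * Zk1 - Matrix.hadamard (recip β) lk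

/-- One D-LADMM step with parameters (W, θ, β): `Z_{k+1}` minimizes
`f(Z) + (1/2)⟨θ∘(Z−R), Z−R⟩`, `E_{k+1}` minimizes `g(E) + (1/2)⟨β∘(E−S), E−S⟩`,
and `λ_{k+1} = λ_k + β∘(AZ_{k+1}+E_{k+1}−X)`. -/
def DLADMMStep {m d n : ℕ} (f : Matrix (Fin d) (Fin n) ℝ → ℝ)
    (g : Matrix (Fin m) (Fin n) ℝ → ℝ) (A : Matrix (Fin m) (Fin d) ℝ)
    (X : Matrix (Fin m) (Fin n) ℝ) (W : Matrix (Fin m) (Fin d) ℝ)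
    (θ : Matrix (Fin d) (Fin n) ℝ) (β : Matrix (Fin m) (Fin n) ℝ)
    (Zk : Matrix (Fin d) (Fin n) ℝ) (Ek lk : Matrix (Fin m) (Fin n) ℝ)
    (Zk1 : Matrix (Fin d) (Fin n) ℝ) (Ek1 lk1 : Matrix (Fin m) (Fin n) ℝ) : Prop :=
  (∀ Z, f Zk1 + (1/2) * finner (Matrix.hadamard θ (Zk1 - Rmat A X W θ β Zk Ek lk))
        (Zk1 - Rmat A X W θ β Zk Ek lk)
      ≤ f Z + (1/2) * finner (Matrix.hadamard θ (Z - Rmat A X W θ β Zk Ek lk))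
        (Z - Rmat A X W θ β Zk Ek lk)) ∧
  (∀ E, g Ek1 + (1/2) * finner (Matrix.hadamard β (Ek1 - Smat A X β Zk1 lk))
        (Ek1 - Smat A X β Zk1 lk)
      ≤ g E + (1/2) * finner (Matrix.hadamard β (E - Smat A X β Zk1 lk))
        (E - Smat A X β Zk1 lk)) ∧
  lk1 = lk + Matrix.hadamard β (A * Zk1 + Ek1 - X)

/-- The KKT / solution set Ω* (stored as triples ω = (Z, E, −λ)). -/
def OmegaStar {m d n : ℕ} (f : Matrix (Fin d) (Fin n) ℝ → ℝ)
    (g : Matrix (Fin m) (Fin n) ℝ → ℝ) (A : Matrix (Fin m) (Fin d) ℝ)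
    (X : Matrix (Fin m) (Fin n) ℝ) : Set (Triple m d n) :=
  {ω | Aᵀ * ω.2.2 ∈ subdiff f ω.1 ∧ ω.2.2 ∈ subdiff g ω.2.1 ∧ A * ω.1 + ω.2.1 = X}

/-- The parameter set `S(σ, A)`. -/
def Sset {m d n : ℕ} (σ : ℝ) (A : Matrix (Fin m) (Fin d) ℝ) :
    Set (Matrix (Fin m) (Fin d) ℝ × Matrix (Fin d) (Fin n) ℝ × Matrix (Fin m) (Fin n) ℝ) :=
  {p | specNorm (p.1 - A) ≤ σ ∧ EntrywisePos p.2.1 ∧ EntrywisePos p.2.2 ∧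
    ∀ Z : Matrix (Fin d) (Fin n) ℝ, Z ≠ 0 → 0 < finner (Dop A p.1 p.2.1 p.2.2 Z) Z}

/-- `dist²_H(ω, S)` where `H` is built from `(W, θ, β)`. -/
def dist2H {m d n : ℕ} (A W : Matrix (Fin m) (Fin d) ℝ) (θ : Matrix (Fin d) (Fin n) ℝ)
    (β : Matrix (Fin m) (Fin n) ℝ) (ω : Triple m d n) (S : Set (Triple m d n)) : ℝ :=
  sInf {r | ∃ ωs ∈ S, r = tinner (ω - ωs) (Hop A W θ β (ω - ωs))}

/-- Frobenius distance of a triple to a set of triples. -/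
def distF {m d n : ℕ} (ω : Triple m d n) (S : Set (Triple m d n)) : ℝ :=
  sInf {r | ∃ ωs ∈ S, r = tfnorm (ω - ωs)}



section Aux

variable {a b : ℕ}

lemma finner_def (M N : Matrix (Fin a) (Fin b) ℝ) :
    finner M N = ∑ j, ∑ i, M i j * N i j := by
  simp [finner, Matrix.trace, Matrix.diag, Matrix.mul_apply, Matrix.transpose_apply]

lemma finner_zero_right (M : Matrix (Fin a) (Fin b) ℝ) : finner M 0 = 0 := by
  simp [finner_def]

lemma finner_had_nonneg {P : Matrix (Fin a) (Fin b) ℝ} (hP : EntrywisePos P)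
    (M : Matrix (Fin a) (Fin b) ℝ) : 0 ≤ finner (Matrix.hadamard P M) M := by
  rw [finner_def]
  refine Finset.sum_nonneg fun j _ => Finset.sum_nonneg fun i _ => ?_
  have h := (hP i j).le
  simp only [Matrix.hadamard_apply]
  nlinarith [sq_nonneg (M i j)]

lemma finner_expand (P u v : Matrix (Fin a) (Fin b) ℝ) (t : ℝ) :
    finner (Matrix.hadamard P (u + t • v)) (u + t • v)
      = finner (Matrix.hadamard P u) u + 2 * t * finner v (Matrix.hadamard P u)
        + t ^ 2 * finner (Matrix.hadamard P v) v := by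
  simp only [finner_def, Matrix.hadamard_apply, Matrix.add_apply, Matrix.smul_apply,
    smul_eq_mul, Finset.mul_sum, ← Finset.sum_add_distrib]
  exact Finset.sum_congr rfl fun j _ => Finset.sum_congr rfl fun i _ => by ring

lemma had_add (P M N : Matrix (Fin a) (Fin b) ℝ) :
    Matrix.hadamard P (M + N) = Matrix.hadamard P M + Matrix.hadamard P N := by
  ext i j; simp [Matrix.hadamard_apply, mul_add]

lemma had_cancel {P : Matrix (Fin a) (Fin b) ℝ} (hP : EntrywisePos P)
    (M : Matrix (Fin a) (Fin b) ℝ) :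
    Matrix.hadamard P (Matrix.hadamard (recip P) M) = M := by
  ext i j
  simp only [Matrix.hadamard_apply, recip, Matrix.of_apply]
  field_simp [(hP i j).ne']

lemma had_cancel' {P : Matrix (Fin a) (Fin b) ℝ} (hP : EntrywisePos P)
    (M : Matrix (Fin a) (Fin b) ℝ) :
    Matrix.hadamard (recip P) (Matrix.hadamard P M) = M := by
  ext i j
  simp only [Matrix.hadamard_apply, recip, Matrix.of_apply]
  field_simp [(hP i j).ne']

lemma quad_vi {f : Matrix (Fin a) (Fin b) ℝ → ℝ} (hf : ConvexOn ℝ Set.univ f)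
    {P : Matrix (Fin a) (Fin b) ℝ} (hP : EntrywisePos P)
    (R x : Matrix (Fin a) (Fin b) ℝ)
    (hmin : ∀ y, f x + (1/2) * finner (Matrix.hadamard P (x - R)) (x - R)
      ≤ f y + (1/2) * finner (Matrix.hadamard P (y - R)) (y - R))
    (y : Matrix (Fin a) (Fin b) ℝ) :
    0 ≤ f y - f x + finner (y - x) (Matrix.hadamard P (x - R)) := by
  set c := finner (Matrix.hadamard P (y - x)) (y - x) with hc
  have hc0 : 0 ≤ c := finner_had_nonneg hP _
  set g0 := f y - f x + finner (y - x) (Matrix.hadamard P (x - R)) with hg0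
  have key : ∀ t : ℝ, 0 < t → t ≤ 1 → 0 ≤ g0 + t * c / 2 := by
    intro t ht ht1
    have hcvx := hf.2 (Set.mem_univ x) (Set.mem_univ y)
      (by linarith : (0:ℝ) ≤ 1 - t) ht.le (by ring)
    have hpt : (1 - t) • x + t • y = x + t • (y - x) := by
      ext i j
      simp [Matrix.add_apply, Matrix.smul_apply, Matrix.sub_apply, smul_eq_mul]
      ring
    rw [hpt] at hcvx
    have hm := hmin (x + t • (y - x))
    rw [show x + t • (y - x) - R = (x - R) + t • (y - x) from by abel] at hm
    rw [finner_expand] at hm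
    have h2 : 0 ≤ t * (g0 + t * c / 2) := by
      simp only [smul_eq_mul] at hcvx
      nlinarith [hm, hcvx]
    nlinarith [h2, ht]
  rcases hc0.eq_or_lt with h | h
  · have := key 1 one_pos le_rfl
    simpa [← h] using this
  · refine le_of_forall_pos_le_add fun ε hε => ?_
    have htpos : 0 < min 1 (ε / c) := lt_min one_pos (div_pos hε h)
    have := key (min 1 (ε / c)) htpos (min_le_left _ _)
    have htc : min 1 (ε / c) * c ≤ ε := by
      calc min 1 (ε / c) * c ≤ (ε / c) * c :=
            mul_le_mul_of_nonneg_right (min_le_right _ _) hc0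
        _ = ε := div_mul_cancel₀ ε h.ne'
    linarith

end Aux

/-- Lemma 1 of the paper: the variational inequality satisfied by one
D-LADMM step. -/
theorem dladmm_lemma1 {m d n : ℕ} [NeZero m] [NeZero d] [NeZero n]
    (f : Matrix (Fin d) (Fin n) ℝ → ℝ) (g : Matrix (Fin m) (Fin n) ℝ → ℝ)
    (hf : ConvexOn ℝ Set.univ f) (hg : ConvexOn ℝ Set.univ g)
    (A W : Matrix (Fin m) (Fin d) ℝ) (X : Matrix (Fin m) (Fin n) ℝ)
    (θ : Matrix (Fin d) (Fin n) ℝ) (β : Matrix (Fin m) (Fin n) ℝ)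
    (hθ : EntrywisePos θ) (hβ : EntrywisePos β)
    (Zk Zk1 : Matrix (Fin d) (Fin n) ℝ) (Ek Ek1 lk lk1 : Matrix (Fin m) (Fin n) ℝ)
    (hstep : DLADMMStep f g A X W θ β Zk Ek lk Zk1 Ek1 lk1) :
    ∀ (Z : Matrix (Fin d) (Fin n) ℝ) (E lam : Matrix (Fin m) (Fin n) ℝ),
      f Z + g E - f Zk1 - g Ek1 +
        tinner ((Z, E, -lam) - (Zk1, Ek1, -lk1))
          (Fop A X W (Zk1, Ek1, -lk1) + Gop W β (Ek - Ek1) +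
            Hop A W θ β ((Zk1, Ek1, -lk1) - (Zk, Ek, -lk))) ≥ 0 := by
  obtain ⟨hZ, hE, hlk1⟩ := hstep
  intro Z E lam
  -- key matrix identities
  have hM0 : lk + Matrix.hadamard β (A * Zk + Ek - X)
      = lk1 + Matrix.hadamard β (Ek - Ek1) - Matrix.hadamard β (A * (Zk1 - Zk)) := by
    rw [hlk1, Matrix.mul_sub]
    ext i j
    simp [Matrix.hadamard_apply, Matrix.add_apply, Matrix.sub_apply]
    ring
  have hA : Matrix.hadamard θ (Zk1 - Rmat A X W θ β Zk Ek lk)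
      = Dop A W θ β (Zk1 - Zk) + Wᵀ * lk1 + Wᵀ * Matrix.hadamard β (Ek - Ek1) := by
    rw [show Zk1 - Rmat A X W θ β Zk Ek lk
        = (Zk1 - Zk) + Matrix.hadamard (recip θ)
            (Wᵀ * (lk + Matrix.hadamard β (A * Zk + Ek - X))) from by
      unfold Rmat; abel]
    rw [had_add, had_cancel hθ, hM0, Matrix.mul_sub, Matrix.mul_add, Dop]
    abel
  have hB : Matrix.hadamard β (Ek1 - Smat A X β Zk1 lk) = lk1 := by
    rw [show Ek1 - Smat A X β Zk1 lk
        = (A * Zk1 + Ek1 - X) + Matrix.hadamard (recip β) lk from by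
      unfold Smat; abel]
    rw [had_add, had_cancel hβ, hlk1]
    abel
  have hT : Fop A X W (Zk1, Ek1, -lk1) + Gop W β (Ek - Ek1) +
        Hop A W θ β ((Zk1, Ek1, -lk1) - (Zk, Ek, -lk))
      = (Matrix.hadamard θ (Zk1 - Rmat A X W θ β Zk Ek lk),
         Matrix.hadamard β (Ek1 - Smat A X β Zk1 lk), 0) := by
    have h3 : Matrix.hadamard (recip β) (-lk1 - -lk) = -(A * Zk1 + Ek1 - X) := by
      rw [show -lk1 - -lk = -(lk1 - lk) from by abel, hlk1,
        show lk + Matrix.hadamard β (A * Zk1 + Ek1 - X) - lk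
          = Matrix.hadamard β (A * Zk1 + Ek1 - X) from by abel]
      ext i j
      simp only [Matrix.neg_apply, Matrix.hadamard_apply, recip, Matrix.of_apply]
      field_simp [(hβ i j).ne']
    simp only [Fop, Gop, Hop, Prod.mk_add_mk, Prod.mk_sub_mk, Prod.add_def, Prod.sub_def,
      Prod.mk.injEq, neg_neg]
    refine ⟨?_, ?_, ?_⟩
    · rw [hA]; abel
    · rw [hB]
      ext i j
      simp [Matrix.hadamard_apply, Matrix.add_apply, Matrix.sub_apply]
      ring
    · rw [h3]; abel
  rw [hT]
  have hω : ((Z, E, -lam) - (Zk1, Ek1, -lk1) : Triple m d n)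
      = (Z - Zk1, E - Ek1, -lam - -lk1) := rfl
  rw [hω]
  have vi1 := quad_vi hf hθ (Rmat A X W θ β Zk Ek lk) Zk1 hZ Z
  have vi2 := quad_vi hg hβ (Smat A X β Zk1 lk) Ek1 hE E
  simp only [tinner, finner_zero_right]
  linarith

end
end

section
/- Let (Z_{k+1}, E_{k+1}, λ_{k+1}) be obtained from (Z_k, E_k, λ_k) by one D-LADMM step with parameters (W_k, θ_k, β_k), and let D_k(Z) = θ_k∘Z − W_kᵀ(β_k∘(AZ)). Then for every Z ∈ ℝ^{d×n}: f(Z) − f(Z_{k+1}) + ⟨Z − Z_{k+1}, W_kᵀλ_{k+1} + W_kᵀ(β_k∘(E_k − E_{k+1})) + D_k(Z_{k+1} − Z_k)⟩ ≥ 0. -/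
open Matrix

noncomputable section

open Finset in
lemma finner_eq {a b : ℕ} (M N : Matrix (Fin a) (Fin b) ℝ) :
    finner M N = ∑ i, ∑ j, M i j * N i j := by
  simp [finner, Matrix.trace, Matrix.mul_apply, Matrix.diag]
  rw [Finset.sum_comm]

lemma finner_symm {a b : ℕ} (M N : Matrix (Fin a) (Fin b) ℝ) : finner M N = finner N M := by
  simp only [finner_eq]; congr 1; ext i; congr 1; ext j; ring

lemma hadamard_sub' {a b : ℕ} (M N P : Matrix (Fin a) (Fin b) ℝ) :
    Matrix.hadamard M (N - P) = Matrix.hadamard M N - Matrix.hadamard M P := by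
  ext i j; simp [Matrix.hadamard_apply, mul_sub]

lemma hadamard_add' {a b : ℕ} (M N P : Matrix (Fin a) (Fin b) ℝ) :
    Matrix.hadamard M (N + P) = Matrix.hadamard M N + Matrix.hadamard M P := by
  ext i j; simp [Matrix.hadamard_apply, mul_add]

lemma hadamard_recip {a b : ℕ} (θ : Matrix (Fin a) (Fin b) ℝ) (hθ : EntrywisePos θ)
    (N : Matrix (Fin a) (Fin b) ℝ) :
    Matrix.hadamard θ (Matrix.hadamard (recip θ) N) = N := by
  ext i j
  simp [Matrix.hadamard_apply, recip]
  rw [← mul_assoc, mul_inv_cancel₀ (hθ i j).ne', one_mul]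

lemma key_id {m d n : ℕ} (A W : Matrix (Fin m) (Fin d) ℝ) (X : Matrix (Fin m) (Fin n) ℝ)
    (θ : Matrix (Fin d) (Fin n) ℝ) (β : Matrix (Fin m) (Fin n) ℝ) (hθ : EntrywisePos θ)
    (Zk Zk1 : Matrix (Fin d) (Fin n) ℝ) (Ek Ek1 lk : Matrix (Fin m) (Fin n) ℝ) :
    Wᵀ * (lk + Matrix.hadamard β (A * Zk1 + Ek1 - X)) + Wᵀ * Matrix.hadamard β (Ek - Ek1)
      + Dop A W θ β (Zk1 - Zk)
      = Matrix.hadamard θ (Zk1 - Rmat A X W θ β Zk Ek lk) := by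
  unfold Dop Rmat
  rw [show Zk1 - (Zk - Matrix.hadamard (recip θ) (Wᵀ * (lk + Matrix.hadamard β (A * Zk + Ek - X))))
      = (Zk1 - Zk) + Matrix.hadamard (recip θ) (Wᵀ * (lk + Matrix.hadamard β (A * Zk + Ek - X)))
      from by abel]
  rw [hadamard_add', hadamard_recip θ hθ]
  simp only [Matrix.mul_sub, Matrix.mul_add, hadamard_sub', hadamard_add']
  abel

lemma finner_had_expand {a b : ℕ} (θ Y D' : Matrix (Fin a) (Fin b) ℝ) (t : ℝ) :
    finner (Matrix.hadamard θ (Y + t • D')) (Y + t • D')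
      = finner (Matrix.hadamard θ Y) Y + 2 * t * finner (Matrix.hadamard θ Y) D'
        + t ^ 2 * finner (Matrix.hadamard θ D') D' := by
  simp only [finner_eq, Matrix.hadamard_apply, Matrix.add_apply, Matrix.smul_apply,
    smul_eq_mul, Finset.mul_sum, ← Finset.sum_add_distrib]
  refine Finset.sum_congr rfl fun i _ => Finset.sum_congr rfl fun j _ => ?_
  ring

lemma pos_of_forall_small (c C : ℝ) (h : ∀ t : ℝ, 0 < t → t ≤ 1 → 0 ≤ t * c + t ^ 2 * C) :
    0 ≤ c := by
  by_contra hc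
  push_neg at hc
  set t : ℝ := min 1 (-c / (2 * (|C| + 1))) with ht
  have hCpos : (0:ℝ) < |C| + 1 := by positivity
  have ht0 : 0 < t := by
    apply lt_min one_pos
    apply div_pos (by linarith) (by positivity)
  have ht1 : t ≤ 1 := min_le_left _ _
  have h2 : t ≤ -c / (2 * (|C| + 1)) := min_le_right _ _
  have := h t ht0 ht1
  have htC : t * C ≤ t * (|C| + 1) := by
    apply mul_le_mul_of_nonneg_left _ ht0.le
    nlinarith [le_abs_self C]
  have h3 : t * (|C| + 1) ≤ -c / 2 := by
    calc t * (|C| + 1) ≤ (-c / (2 * (|C| + 1))) * (|C| + 1) :=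
            mul_le_mul_of_nonneg_right h2 hCpos.le
      _ = -c / 2 := by field_simp
  nlinarith [sq_nonneg t]

/-- the variational inequality for the `Z`-update of one D-LADMM step. -/
theorem dladmm_Z_variational_inequality {m d n : ℕ} [NeZero m] [NeZero d] [NeZero n]
    (f : Matrix (Fin d) (Fin n) ℝ → ℝ) (g : Matrix (Fin m) (Fin n) ℝ → ℝ)
    (hf : ConvexOn ℝ Set.univ f) (hg : ConvexOn ℝ Set.univ g)
    (A W : Matrix (Fin m) (Fin d) ℝ) (X : Matrix (Fin m) (Fin n) ℝ)
    (θ : Matrix (Fin d) (Fin n) ℝ) (β : Matrix (Fin m) (Fin n) ℝ)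
    (hθ : EntrywisePos θ) (hβ : EntrywisePos β)
    (Zk Zk1 : Matrix (Fin d) (Fin n) ℝ) (Ek Ek1 lk lk1 : Matrix (Fin m) (Fin n) ℝ)
    (hstep : DLADMMStep f g A X W θ β Zk Ek lk Zk1 Ek1 lk1) :
    ∀ Z : Matrix (Fin d) (Fin n) ℝ,
      f Z - f Zk1 +
        finner (Z - Zk1)
          (Wᵀ * lk1 + Wᵀ * Matrix.hadamard β (Ek - Ek1) + Dop A W θ β (Zk1 - Zk)) ≥ 0 := by
  intro Z
  obtain ⟨hZmin, _, hl⟩ := hstep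
  set R := Rmat A X W θ β Zk Ek lk with hR
  set D' := Z - Zk1 with hD'
  -- reduce goal via the algebraic identity
  have hid : Wᵀ * lk1 + Wᵀ * Matrix.hadamard β (Ek - Ek1) + Dop A W θ β (Zk1 - Zk)
      = Matrix.hadamard θ (Zk1 - R) := by
    rw [hl]; exact key_id A W X θ β hθ Zk Zk1 Ek Ek1 lk
  rw [hid, ge_iff_le, finner_symm]
  -- main variational argument
  refine pos_of_forall_small _ ((1/2) * finner (Matrix.hadamard θ D') D') (fun t ht0 ht1 => ?_)
  have hconv := hf.2 (Set.mem_univ Zk1) (Set.mem_univ Z) (by linarith : (0:ℝ) ≤ 1 - t)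
    ht0.le (by ring)
  have hZt : (1 - t) • Zk1 + t • Z = Zk1 + t • D' := by
    rw [hD']; rw [smul_sub]; module
  rw [hZt] at hconv
  have hmin := hZmin (Zk1 + t • D')
  have hexp : Zk1 + t • D' - R = (Zk1 - R) + t • D' := by abel
  rw [hexp, finner_had_expand] at hmin
  simp only [smul_eq_mul] at hconv
  nlinarith [hmin, hconv]

end
end

section
/- Let Z_{k+1}, E_{k+1}, E_k ∈ appropriate matrix spaces, let λ_{k+1} = λ_k + β_k∘(AZ_{k+1} + E_{k+1} − X), let (Z*, E*, −λ*) = ω* with AZ* + E* = X, write ω_{k+1} = (Z_{k+1}, E_{k+1}, −λ_{k+1}), and let G_k(E') = (W_kᵀ(β_k∘E'), β_k∘E', 0). Then ⟨ω_{k+1} − ω*, G_k(E_k − E_{k+1})⟩ = ⟨β_k∘(E_k − E_{k+1}), (W_k − A)(Z_{k+1} − Z*)⟩ + ⟨E_k − E_{k+1}, λ_{k+1} − λ_k⟩. -/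
open Matrix

noncomputable section

/-! Feasibility of `ω*` turns the multiplier increment `λ_{k+1} − λ_k` into
`β∘(A(Z_{k+1} − Z*) + (E_{k+1} − E*))`. Moving `β` and `Wᵀ` across the Frobenius pairing, both
sides become `⟨β∘(E_k − E_{k+1}), W(Z_{k+1} − Z*) + (E_{k+1} − E*)⟩`. -/

section Frobenius

variable {a b : ℕ}

lemma finner_comm (M N : Matrix (Fin a) (Fin b) ℝ) : finner M N = finner N M := by
  rw [finner, finner, ← trace_transpose, transpose_mul, transpose_transpose]

lemma finner_add_right (M N P : Matrix (Fin a) (Fin b) ℝ) :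
    finner M (N + P) = finner M N + finner M P := by
  simp only [finner, Matrix.mul_add, trace_add]

lemma finner_mul_left {c : ℕ} (W : Matrix (Fin a) (Fin b) ℝ) (Z : Matrix (Fin b) (Fin c) ℝ)
    (M : Matrix (Fin a) (Fin c) ℝ) : finner (W * Z) M = finner Z (Wᵀ * M) := by
  rw [finner, finner, transpose_mul, Matrix.mul_assoc]

lemma finner_hadamard_left (β E M : Matrix (Fin a) (Fin b) ℝ) :
    finner (β ⊙ E) M = finner E (β ⊙ M) := by
  simp only [finner, trace, diag, mul_apply, transpose_apply, hadamard_apply]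
  exact Finset.sum_congr rfl fun _ _ => Finset.sum_congr rfl fun _ _ => by ring

end Frobenius

lemma tinner_Gop {m d n : ℕ} (W : Matrix (Fin m) (Fin d) ℝ) (β E' : Matrix (Fin m) (Fin n) ℝ)
    (ω : Triple m d n) : tinner ω (Gop W β E') = finner (β ⊙ E') (W * ω.1 + ω.2.1) := by
  rw [tinner, Gop, finner_zero_right, add_zero, ← finner_mul_left, finner_add_right,
    finner_comm, finner_comm ω.2.1]

theorem dladmm_G_identity_general {m d n : ℕ}
    (A W : Matrix (Fin m) (Fin d) ℝ) (X : Matrix (Fin m) (Fin n) ℝ)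
    (β : Matrix (Fin m) (Fin n) ℝ)
    (Zk1 Zs : Matrix (Fin d) (Fin n) ℝ) (Ek Ek1 Es lk lk1 ls : Matrix (Fin m) (Fin n) ℝ)
    (hl : lk1 = lk + Matrix.hadamard β (A * Zk1 + Ek1 - X))
    (hfeas : A * Zs + Es = X) :
    tinner ((Zk1, Ek1, -lk1) - (Zs, Es, -ls)) (Gop W β (Ek - Ek1))
      = finner (Matrix.hadamard β (Ek - Ek1)) ((W - A) * (Zk1 - Zs))
        + finner (Ek - Ek1) (lk1 - lk) := by
  have hincr : lk1 - lk = β ⊙ (A * (Zk1 - Zs) + (Ek1 - Es)) := by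
    rw [hl, add_sub_cancel_left, ← hfeas, Matrix.mul_sub]
    congr 1
    abel
  rw [tinner_Gop, hincr, ← finner_hadamard_left β (Ek - Ek1), ← finner_add_right]
  congr 1
  simp only [Prod.fst_sub, Prod.snd_sub, Matrix.sub_mul]
  abel

/-- the algebraic identity for the `G_k`-pairing. -/
theorem dladmm_G_identity {m d n : ℕ} [NeZero m] [NeZero d] [NeZero n]
    (A W : Matrix (Fin m) (Fin d) ℝ) (X : Matrix (Fin m) (Fin n) ℝ)
    (β : Matrix (Fin m) (Fin n) ℝ) (hβ : EntrywisePos β)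
    (Zk1 Zs : Matrix (Fin d) (Fin n) ℝ) (Ek Ek1 Es lk lk1 ls : Matrix (Fin m) (Fin n) ℝ)
    (hl : lk1 = lk + Matrix.hadamard β (A * Zk1 + Ek1 - X))
    (hfeas : A * Zs + Es = X) :
    tinner ((Zk1, Ek1, -lk1) - (Zs, Es, -ls)) (Gop W β (Ek - Ek1))
      = finner (Matrix.hadamard β (Ek - Ek1)) ((W - A) * (Zk1 - Zs))
        + finner (Ek - Ek1) (lk1 - lk) :=
  dladmm_G_identity_general A W X β Zk1 Zs Ek Ek1 Es lk lk1 ls hl hfeas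

end
end

section
/- Suppose θ ∈ ℝ^{d×n} and β ∈ ℝ^{m×n} are entrywise positive and the operator D(Z) = θ∘Z − Aᵀ(β∘(AZ)) is positive definite. If (Z, E, λ) is a fixed point of the D-LADMM step with parameters (A, θ, β) (i.e., the step maps (Z, E, λ) to itself), then (Z, E, −λ) ∈ Ω*: namely AZ + E = X, −Aᵀλ ∈ ∂f(Z), and −λ ∈ ∂g(E). -/
open Matrix

noncomputable section

/-!
At a fixed point the multiplier update reads `β∘(AZ + E − X) = 0`, so the constraint holds.
Feeding it back into the definitions of `R` and `S` gives `θ∘(Z − R) = Aᵀλ` and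
`β∘(E − S) = λ`. Each block is then the minimizer of a convex function plus the weighted
quadratic `½⟨c∘(· − P), · − P⟩`, whose first-order condition `−c∘(x − P) ∈ ∂f(x)` is obtained
by comparing `x` with the points `x + t(y − x)` and letting `t ↓ 0`.
-/

lemma finner_eq_sum {a b : ℕ} (M N : Matrix (Fin a) (Fin b) ℝ) :
    finner M N = ∑ j, ∑ i, M i j * N i j := by
  simp [finner, Matrix.trace, Matrix.diag, Matrix.mul_apply]

lemma finner_neg_left {a b : ℕ} (M N : Matrix (Fin a) (Fin b) ℝ) :
    finner (-M) N = -finner M N := by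
  simp [finner_eq_sum]

lemma finner_hadamard_add_smul {a b : ℕ} (c u w : Matrix (Fin a) (Fin b) ℝ) (t : ℝ) :
    finner (c ⊙ (u + t • w)) (u + t • w)
      = finner (c ⊙ u) u + 2 * t * finner (c ⊙ u) w + t ^ 2 * finner (c ⊙ w) w := by
  simp only [finner_eq_sum, Finset.mul_sum, ← Finset.sum_add_distrib]
  refine Finset.sum_congr rfl fun j _ => Finset.sum_congr rfl fun i _ => ?_
  simp only [hadamard_apply, Matrix.add_apply, Matrix.smul_apply, smul_eq_mul]
  ring

lemma hadamard_recip_hadamard {a b : ℕ} {c : Matrix (Fin a) (Fin b) ℝ} (hc : ∀ i j, c i j ≠ 0)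
    (M : Matrix (Fin a) (Fin b) ℝ) : c ⊙ (recip c ⊙ M) = M := by
  ext i j
  exact mul_inv_cancel_left₀ (hc i j) _

lemma eq_zero_of_hadamard_eq_zero {a b : ℕ} {c M : Matrix (Fin a) (Fin b) ℝ}
    (hc : ∀ i j, c i j ≠ 0) (h : c ⊙ M = 0) : M = 0 := by
  ext i j
  exact (mul_eq_zero.1 (congrFun₂ h i j)).resolve_left (hc i j)

open Filter Topology in
lemma nonneg_of_forall_add_mul_nonneg {a b : ℝ}
    (h : ∀ t : ℝ, 0 < t → t ≤ 1 → 0 ≤ a + b * t) : 0 ≤ a := by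
  have hlim : Tendsto (fun t => a + b * t) (𝓝[>] 0) (𝓝 a) := tendsto_nhdsWithin_of_tendsto_nhds
    ((by fun_prop : Continuous fun t => a + b * t).tendsto' 0 a (by simp))
  refine ge_of_tendsto hlim ?_
  filter_upwards [Ioo_mem_nhdsGT one_pos] with t ht
  exact h t ht.1 ht.2.le

lemma neg_hadamard_mem_subdiff_of_minimizer {a b : ℕ} {f : Matrix (Fin a) (Fin b) ℝ → ℝ}
    (hf : ConvexOn ℝ Set.univ f) (c P x : Matrix (Fin a) (Fin b) ℝ)
    (hmin : ∀ y, f x + (1/2) * finner (c ⊙ (x - P)) (x - P)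
      ≤ f y + (1/2) * finner (c ⊙ (y - P)) (y - P)) :
    -(c ⊙ (x - P)) ∈ subdiff f x := by
  intro y
  rw [finner_neg_left, ge_iff_le, ← sub_nonneg]
  set B := finner (c ⊙ (x - P)) (y - x)
  set C := finner (c ⊙ (y - x)) (y - x)
  refine nonneg_of_forall_add_mul_nonneg (b := C / 2) fun t ht0 ht1 => ?_
  have hcompare := hmin (x + t • (y - x))
  rw [show x + t • (y - x) - P = (x - P) + t • (y - x) by abel,
    finner_hadamard_add_smul] at hcompare
  have hconv : f (x + t • (y - x)) ≤ (1 - t) * f x + t * f y := by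
    have := hf.2 (Set.mem_univ x) (Set.mem_univ y) (sub_nonneg.2 ht1) ht0.le (by ring)
    rwa [show (1 - t) • x + t • y = x + t • (y - x) by module] at this
  refine nonneg_of_mul_nonneg_right ?_ ht0
  linarith

lemma hadamard_sub_Rmat_of_feasible {m d n : ℕ} {A W : Matrix (Fin m) (Fin d) ℝ}
    {X : Matrix (Fin m) (Fin n) ℝ} {θ : Matrix (Fin d) (Fin n) ℝ} {β : Matrix (Fin m) (Fin n) ℝ}
    {Z : Matrix (Fin d) (Fin n) ℝ} {E lam : Matrix (Fin m) (Fin n) ℝ}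
    (hθ : ∀ i j, θ i j ≠ 0) (hfeas : A * Z + E = X) :
    θ ⊙ (Z - Rmat A X W θ β Z E lam) = Wᵀ * lam := by
  simp [Rmat, hfeas, hadamard_recip_hadamard hθ]

lemma hadamard_sub_Smat_of_feasible {m d n : ℕ} {A : Matrix (Fin m) (Fin d) ℝ}
    {X β : Matrix (Fin m) (Fin n) ℝ} {Z : Matrix (Fin d) (Fin n) ℝ}
    {E lam : Matrix (Fin m) (Fin n) ℝ}
    (hβ : ∀ i j, β i j ≠ 0) (hfeas : A * Z + E = X) :
    β ⊙ (E - Smat A X β Z lam) = lam := by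
  rw [Smat, ← hfeas, show E - (A * Z + E - A * Z - recip β ⊙ lam) = recip β ⊙ lam by abel,
    hadamard_recip_hadamard hβ]

lemma feasible_of_multiplier_fixed {m d n : ℕ} {A : Matrix (Fin m) (Fin d) ℝ}
    {X β : Matrix (Fin m) (Fin n) ℝ} {Z : Matrix (Fin d) (Fin n) ℝ}
    {E lam : Matrix (Fin m) (Fin n) ℝ}
    (hβ : ∀ i j, β i j ≠ 0) (hfix : lam = lam + β ⊙ (A * Z + E - X)) : A * Z + E = X :=
  sub_eq_zero.1 (eq_zero_of_hadamard_eq_zero hβ (left_eq_add.1 hfix))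

theorem dladmm_fixed_point_is_kkt_general {m d n : ℕ}
    (f : Matrix (Fin d) (Fin n) ℝ → ℝ) (g : Matrix (Fin m) (Fin n) ℝ → ℝ)
    (hf : ConvexOn ℝ Set.univ f) (hg : ConvexOn ℝ Set.univ g)
    (A : Matrix (Fin m) (Fin d) ℝ) (X : Matrix (Fin m) (Fin n) ℝ)
    (θ : Matrix (Fin d) (Fin n) ℝ) (β : Matrix (Fin m) (Fin n) ℝ)
    (hθ : EntrywisePos θ) (hβ : EntrywisePos β)
    (Z : Matrix (Fin d) (Fin n) ℝ) (E lam : Matrix (Fin m) (Fin n) ℝ)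
    (hfix : DLADMMStep f g A X A θ β Z E lam Z E lam) :
    A * Z + E = X ∧ -(Aᵀ * lam) ∈ subdiff f Z ∧ -lam ∈ subdiff g E := by
  obtain ⟨hZ, hE, hlam⟩ := hfix
  have hθ0 : ∀ i j, θ i j ≠ 0 := fun i j => (hθ i j).ne'
  have hβ0 : ∀ i j, β i j ≠ 0 := fun i j => (hβ i j).ne'
  have hfeas := feasible_of_multiplier_fixed hβ0 hlam
  refine ⟨hfeas, ?_, ?_⟩
  · simpa only [hadamard_sub_Rmat_of_feasible hθ0 hfeas] using
      neg_hadamard_mem_subdiff_of_minimizer hf θ _ Z hZ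
  · simpa only [hadamard_sub_Smat_of_feasible hβ0 hfeas] using
      neg_hadamard_mem_subdiff_of_minimizer hg β _ E hE

/-- Lemma 3 of the paper, for `W = A`: a fixed point of the D-LADMM step
with parameters `(A, θ, β)` is a KKT point of the problem. -/
theorem dladmm_fixed_point_is_kkt {m d n : ℕ} [NeZero m] [NeZero d] [NeZero n]
    (f : Matrix (Fin d) (Fin n) ℝ → ℝ) (g : Matrix (Fin m) (Fin n) ℝ → ℝ)
    (hf : ConvexOn ℝ Set.univ f) (hg : ConvexOn ℝ Set.univ g)
    (A : Matrix (Fin m) (Fin d) ℝ) (X : Matrix (Fin m) (Fin n) ℝ)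
    (θ : Matrix (Fin d) (Fin n) ℝ) (β : Matrix (Fin m) (Fin n) ℝ)
    (hθ : EntrywisePos θ) (hβ : EntrywisePos β)
    (hD : ∀ Z : Matrix (Fin d) (Fin n) ℝ, Z ≠ 0 → 0 < finner (Dop A A θ β Z) Z)
    (Z : Matrix (Fin d) (Fin n) ℝ) (E lam : Matrix (Fin m) (Fin n) ℝ)
    (hfix : DLADMMStep f g A X A θ β Z E lam Z E lam) :
    A * Z + E = X ∧ -(Aᵀ * lam) ∈ subdiff f Z ∧ -lam ∈ subdiff g E :=
  dladmm_fixed_point_is_kkt_general f g hf hg A X θ β hθ hβ Z E lam hfix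

end
end
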